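/- Let G be a finite chordal graph. Then there exists an acyclic matching V on the independence complex I(G) such that every V-critical simplex, except possibly one 0-dimensional simplex, is a maximal simplex of I(G). -/

import Mathlib

open Finset

/-- A (nonempty-face) abstract simplicial complex on vertex set `V`:
faces are nonempty finite sets, closed under nonempty subsets. -/
def IsComplex {V : Type*} (X : Set (Finset V)) : Prop :=
  (∀ s ∈ X, s.Nonempty) ∧ ∀ ⦃s t : Finset V⦄, s ∈ X → t ⊆ s → t.Nonempty → t ∈ X

/-- Nonempty independent sets of `G` avoiding the vertex set `U`;
this is the set of simplices of the independence complex `I(G − U)`. -/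
def avoidIndep {V : Type*} (G : SimpleGraph V) (U : Set V) : Set (Finset V) :=
  {s | s.Nonempty ∧ (∀ x ∈ s, x ∉ U) ∧ ∀ x ∈ s, ∀ y ∈ s, ¬ G.Adj x y}

/-- The independence complex of `G` (set of nonempty simplices). -/
def indepComplex {V : Type*} (G : SimpleGraph V) : Set (Finset V) :=
  avoidIndep G ∅

/-- A matching on the Hasse diagram of a simplicial complex `X`. -/
structure IsMatching {V : Type*} (X : Set (Finset V)) (M : Set (Finset V × Finset V)) : Prop where
  left_mem : ∀ p ∈ M, p.1 ∈ X
  right_mem : ∀ p ∈ M, p.2 ∈ X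
  subset : ∀ p ∈ M, p.1 ⊆ p.2
  card_eq : ∀ p ∈ M, p.2.card = p.1.card + 1
  eq_of_shared : ∀ p ∈ M, ∀ q ∈ M,
    p.1 = q.1 ∨ p.1 = q.2 ∨ p.2 = q.1 ∨ p.2 = q.2 → p = q

/-- One step of the modified Hasse diagram: matched edges are reversed (point upwards),
all other Hasse edges point from a simplex to its codimension-1 faces. -/
def matchStep {V : Type*} (X : Set (Finset V)) (M : Set (Finset V × Finset V))
    (σ τ : Finset V) : Prop :=
  σ ∈ X ∧ τ ∈ X ∧
    ((σ, τ) ∈ M ∨ (τ ⊆ σ ∧ σ.card = τ.card + 1 ∧ (τ, σ) ∉ M))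

/-- An acyclic matching: reversing matched edges leaves the Hasse diagram acyclic. -/
def IsAcyclicMatching {V : Type*} (X : Set (Finset V)) (M : Set (Finset V × Finset V)) : Prop :=
  IsMatching X M ∧ ∀ σ, ¬ Relation.TransGen (matchStep X M) σ σ

/-- A critical (unmatched) simplex. -/
def IsCritical {V : Type*} (X : Set (Finset V)) (M : Set (Finset V × Finset V))
    (σ : Finset V) : Prop :=
  σ ∈ X ∧ ∀ p ∈ M, p.1 ≠ σ ∧ p.2 ≠ σ

/-- The number of `d`-dimensional critical simplices. -/
noncomputable def critCount {V : Type*} (X : Set (Finset V)) (M : Set (Finset V × Finset V))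
    (d : ℕ) : ℕ :=
  {σ | IsCritical X M σ ∧ σ.card = d + 1}.ncard

/-- A complex is collapsible if it admits an acyclic matching with a unique critical simplex. -/
def Collapsible {V : Type*} (X : Set (Finset V)) : Prop :=
  ∃ M, IsAcyclicMatching X M ∧ ∃! σ, IsCritical X M σ

/-- A maximal face of a complex. -/
def IsMaximalFace {V : Type*} (X : Set (Finset V)) (σ : Finset V) : Prop :=
  σ ∈ X ∧ ∀ τ ∈ X, σ ⊆ τ → σ = τ

/-- All critical simplices of the matching are maximal faces,
except possibly a single critical 0-simplex. -/
def ExceptOneMaximal {V : Type*} (X : Set (Finset V)) (M : Set (Finset V × Finset V)) : Prop :=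
  (∀ σ, IsCritical X M σ → ¬ IsMaximalFace X σ → σ.card = 1) ∧
  (∀ σ τ, IsCritical X M σ → IsCritical X M τ →
    ¬ IsMaximalFace X σ → ¬ IsMaximalFace X τ → σ = τ)

/-- The geometric realization of a complex, as a subspace of `V → ℝ`. -/
def realizationSet {V : Type*} (X : Set (Finset V)) : Set (V → ℝ) :=
  {f | (∀ v, 0 ≤ f v) ∧ ∃ s ∈ X, (∀ v, f v ≠ 0 ↔ v ∈ s) ∧ ∑ v ∈ s, f v = 1}

/-- The base point of the `d`-dimensional unit sphere. -/
noncomputable def spherePt (d : ℕ) : Metric.sphere (0 : EuclideanSpace ℝ (Fin (d+1))) 1 :=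
  ⟨EuclideanSpace.single 0 1, by simp⟩

/-- Identify all base points of the given spheres with a single external point. -/
noncomputable def WedgeRel (c : ℕ → ℕ) :
    (Unit ⊕ Σ d : ℕ, Fin (c d) × Metric.sphere (0 : EuclideanSpace ℝ (Fin (d+1))) 1) →
    (Unit ⊕ Σ d : ℕ, Fin (c d) × Metric.sphere (0 : EuclideanSpace ℝ (Fin (d+1))) 1) → Prop :=
  fun x y => ∃ d i, x = Sum.inr ⟨d, i, spherePt d⟩ ∧ y = Sum.inl ()

/-- The wedge of spheres with `c d` spheres of dimension `d` (a point if all `c d = 0`). -/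
noncomputable def WedgeOfSpheres (c : ℕ → ℕ) : Type :=
  Quot (WedgeRel c)

noncomputable instance (c : ℕ → ℕ) : TopologicalSpace (WedgeOfSpheres c) :=
  instTopologicalSpaceQuot

/-- A universal vertex: adjacent to every other vertex. -/
def IsUniversal {V : Type*} (G : SimpleGraph V) (u : V) : Prop :=
  ∀ w, w ≠ u → G.Adj u w

/-- A chordal graph: no induced cycle of length at least 4. -/
def Chordal {W : Type*} (H : SimpleGraph W) : Prop :=
  ¬ ∃ n, 4 ≤ n ∧ ∃ f : ZMod n → W, Function.Injective f ∧
    ∀ i j, H.Adj (f i) (f j) ↔ (j = i + 1 ∨ i = j + 1)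

/-- The domination number of a graph. -/
noncomputable def dominationNumber {V : Type*} (G : SimpleGraph V) : ℕ :=
  sInf {n | ∃ S : Finset V, S.card = n ∧ ∀ w, w ∉ S → ∃ x ∈ S, G.Adj x w}

/-- `G` belongs to the family `𝒢 m n`: the blocks are the fibres of `P`
(all nonempty, i.e. `P` surjective), and two distinct vertices are adjacent
iff their block indices are comparable in the product order. -/
def GridGraph {V : Type*} (m n : ℕ) (G : SimpleGraph V)
    (P : V → Fin (m+1) × Fin (n+1)) : Prop :=
  Function.Surjective P ∧ ∀ x y, G.Adj x y ↔ x ≠ y ∧ (P x ≤ P y ∨ P y ≤ P x)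

/-- The closed neighbourhood `N_G[v]`. -/
def closedNbhd {V : Type*} (G : SimpleGraph V) (v : V) : Set V :=
  insert v (G.neighborSet v)

/-- Independent sets of `G` (including `∅`) avoiding the vertex set `U`;
the full set of simplices (with the empty simplex) of `I(G − U)`. -/
def avoidIndepE {V : Type*} (G : SimpleGraph V) (U : Set V) : Set (Finset V) :=
  {s | (∀ x ∈ s, x ∉ U) ∧ ∀ x ∈ s, ∀ y ∈ s, ¬ G.Adj x y}

/-- The independence complex of `G`, including the empty simplex. -/
def indepComplexE {V : Type*} (G : SimpleGraph V) : Set (Finset V) :=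
  avoidIndepE G ∅

/-!
A simplicial vertex `v` (one whose neighbourhood is a clique) exists in every nonempty induced
subgraph of a chordal graph (Dirac). Work with the complexes `I(G - U)` including the empty face,
by induction on `U`. Since `N(v)` is a clique, a face meets `N(v)` in `∅` or in one vertex `u`.
Faces of the first kind are matched as `σ ↔ σ ∪ {v}`; those of the second kind are `τ ∪ {u}`
with `τ` a face of `I(G - U - N[u])`, matched by induction. The trace on `N(v)` can only shrink
along a gradient path, so acyclicity reduces to the single fibres, and every critical face is
maximal. Deleting the empty face turns its partner `{v}` into the only possibly non-maximal
critical face.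
-/

lemma Relation.ReflTransGen.exists_seq {α : Type*} {r : α → α → Prop} {a b : α}
    (h : Relation.ReflTransGen r a b) :
    ∃ n, ∃ f : ℕ → α, f 0 = a ∧ f n = b ∧ ∀ i < n, r (f i) (f (i + 1)) := by
  induction h with
  | refl => exact ⟨0, fun _ => a, rfl, rfl, fun i hi => absurd hi (Nat.not_lt_zero i)⟩
  | @tail b c _ hbc ih =>
    obtain ⟨n, f, h0, hn, hf⟩ := ih
    refine ⟨n + 1, fun i => if i ≤ n then f i else c, by simpa using h0, by simp, fun i hi => ?_⟩
    rcases (show i < n ∨ i = n by omega) with hi | rfl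
    · simpa [hi.le, Nat.succ_le_of_lt hi] using hf i hi
    · simpa [hn] using hbc

lemma Relation.TransGen.lt_of_forall_lt {α : Type*} {r : α → α → Prop} {a b : α} (m : α → ℕ)
    (hm : ∀ a b, r a b → m b < m a) (h : Relation.TransGen r a b) : m b < m a := by
  induction h with
  | single h => exact hm _ _ h
  | tail _ h ih => exact (hm _ _ h).trans ih

section InducedCycle

variable {V : Type*} {G : SimpleGraph V}

lemma ZMod.eq_add_one_iff_val {n : ℕ} [NeZero n] (hn : 1 < n) (i j : ZMod n) :
    j = i + 1 ↔ j.val = i.val + 1 ∨ i.val + 1 = n ∧ j.val = 0 := by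
  have : Fact (1 < n) := ⟨hn⟩
  have hsucc : (i + 1).val = (i.val + 1) % n := by rw [ZMod.val_add, ZMod.val_one]
  have hi := ZMod.val_lt i
  have hj := ZMod.val_lt j
  rw [← (ZMod.val_injective n).eq_iff, hsucc]
  rcases (show i.val + 1 < n ∨ i.val + 1 = n by omega) with h | h
  · rw [Nat.mod_eq_of_lt h]; omega
  · rw [h, Nat.mod_self]; omega

theorem not_chordal_of_induced_cycle (n : ℕ) (c : ℕ → V) (hn : 4 ≤ n)
    (hc : ∀ i j, i < j → j < n →
      c i ≠ c j ∧ (G.Adj (c i) (c j) ↔ j = i + 1 ∨ i = 0 ∧ j = n - 1)) :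
    ¬ Chordal G := by
  have : NeZero n := ⟨by omega⟩
  refine fun hG => hG ⟨n, hn, fun i => c i.val, fun i j h => ?_, fun i j => ?_⟩
  · have hi := ZMod.val_lt i
    have hj := ZMod.val_lt j
    refine ZMod.val_injective _ (by_contra fun hij => ?_)
    rcases Nat.lt_or_gt_of_ne hij with hlt | hlt
    · exact (hc _ _ hlt hj).1 h
    · exact (hc _ _ hlt hi).1 h.symm
  · rw [ZMod.eq_add_one_iff_val (by omega), ZMod.eq_add_one_iff_val (by omega)]
    have hi := ZMod.val_lt i
    have hj := ZMod.val_lt j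
    rcases lt_trichotomy i.val j.val with h | h | h
    · rw [(hc _ _ h hj).2]; omega
    · simp only [h, G.irrefl, false_iff]; omega
    · rw [G.adj_comm, (hc _ _ h hi).2]; omega

end InducedCycle

section Walks

variable {V : Type*} {G : SimpleGraph V} {A B : Set V}

def IsWalkVia (G : SimpleGraph V) (A : Set V) (n : ℕ) (g : ℕ → V) : Prop :=
  (∀ i < n, G.Adj (g i) (g (i + 1))) ∧ ∀ i, 0 < i → i < n → g i ∈ A

def IsInducedPath (G : SimpleGraph V) (n : ℕ) (g : ℕ → V) : Prop :=
  ∀ i j, i < j → j ≤ n → g i ≠ g j ∧ (G.Adj (g i) (g j) ↔ j = i + 1)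

lemma IsWalkVia.mono_length {n m : ℕ} {g : ℕ → V} (hg : IsWalkVia G A n g) (hmn : m ≤ n) :
    IsWalkVia G A m g :=
  ⟨fun i hi => hg.1 i (by omega), fun i hi₀ hi => hg.2 i hi₀ (by omega)⟩

lemma IsWalkVia.two_le {n : ℕ} {g : ℕ → V} (hg : IsWalkVia G A n g) (hne : g 0 ≠ g n)
    (hnadj : ¬ G.Adj (g 0) (g n)) : 2 ≤ n := by
  rcases n with _ | _ | n
  · exact absurd rfl hne
  · exact absurd (hg.1 0 one_pos) hnadj
  · omega

lemma IsWalkVia.shortcut {n i k : ℕ} {g : ℕ → V} (hg : IsWalkVia G A n g) (hik : i < k)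
    (hk : k ≤ n) (hadj : G.Adj (g i) (g k)) :
    ∃ g', IsWalkVia G A (n - (k - i - 1)) g' ∧ g' 0 = g 0 ∧ g' (n - (k - i - 1)) = g n := by
  refine ⟨fun p => if p ≤ i then g p else g (p + (k - i - 1)), ⟨fun p hp => ?_, fun p hp₀ hp => ?_⟩,
    by simp, ?_⟩
  · rcases lt_trichotomy p i with h | rfl | h
    · simpa [h.le, Nat.succ_le_of_lt h] using hg.1 p (by omega)
    · simpa [show p + 1 + (k - p - 1) = k by omega] using hadj
    · simpa [show ¬ p ≤ i by omega, show ¬ p + 1 ≤ i by omega,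
        show p + 1 + (k - i - 1) = p + (k - i - 1) + 1 by omega] using hg.1 _ (by omega)
  · dsimp only
    split_ifs
    · exact hg.2 p hp₀ (by omega)
    · exact hg.2 _ (by omega) (by omega)
  · dsimp only
    split_ifs <;> congr 1 <;> omega

lemma exists_isInducedPath {x y : V} (h : ∃ n g, IsWalkVia G A n g ∧ g 0 = x ∧ g n = y) :
    ∃ n g, IsWalkVia G A n g ∧ g 0 = x ∧ g n = y ∧ IsInducedPath G n g := by
  classical
  obtain ⟨g, hg, hx, hy⟩ := Nat.find_spec h
  refine ⟨Nat.find h, g, hg, hx, hy, fun i j hij hj => ⟨fun he => ?_, ⟨fun hadj => ?_, ?_⟩⟩⟩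
  · rcases hj.lt_or_eq with hj | rfl
    · obtain ⟨g', hg', h0, hn⟩ := hg.shortcut (show i < j + 1 by omega) hj (he ▸ hg.1 j hj)
      exact Nat.find_min h (show Nat.find h - (j + 1 - i - 1) < Nat.find h by omega)
        ⟨g', hg', h0.trans hx, hn.trans hy⟩
    · exact Nat.find_min h hij ⟨g, hg.mono_length hij.le, hx, he.trans hy⟩
  · by_contra hne
    obtain ⟨g', hg', h0, hn⟩ := hg.shortcut hij hj hadj
    exact Nat.find_min h (show Nat.find h - (j - i - 1) < Nat.find h by omega)
      ⟨g', hg', h0.trans hx, hn.trans hy⟩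
  · rintro rfl
    exact hg.1 i (by omega)

/-- The two paths close up to an induced cycle of length `n₁ + n₂ ≥ 4`. -/
theorem not_chordal_of_induced_paths {n₁ n₂ : ℕ} {g₁ g₂ : ℕ → V}
    (hw₁ : IsWalkVia G A n₁ g₁) (hw₂ : IsWalkVia G B n₂ g₂)
    (hp₁ : IsInducedPath G n₁ g₁) (hp₂ : IsInducedPath G n₂ g₂) (hn₁ : 2 ≤ n₁) (hn₂ : 2 ≤ n₂)
    (hy : g₁ n₁ = g₂ 0) (hx : g₂ n₂ = g₁ 0) (hAB : ∀ p ∈ A, ∀ q ∈ B, p ≠ q ∧ ¬ G.Adj p q) :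
    ¬ Chordal G := by
  set c : ℕ → V := fun p => if p ≤ n₁ then g₁ p else g₂ (p - n₁)
  have hc₁ : ∀ p ≤ n₁, c p = g₁ p := fun p hp => if_pos hp
  have hc₂ : ∀ p ≥ n₁, c p = g₂ (p - n₁) := fun p hp => by
    rcases hp.lt_or_eq with hp | rfl
    · exact if_neg (by omega)
    · simpa [c] using hy
  refine not_chordal_of_induced_cycle (n₁ + n₂) c (by omega) fun i j hij hj => ?_
  by_cases hj₁ : j ≤ n₁
  · rw [hc₁ i (by omega), hc₁ j hj₁]
    simpa [show j ≠ n₁ + n₂ - 1 by omega] using hp₁ i j hij hj₁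
  by_cases hi₁ : n₁ ≤ i
  · rw [hc₂ i hi₁, hc₂ j (by omega)]
    simpa [show j - n₁ = i - n₁ + 1 ↔ j = i + 1 by omega, show i ≠ 0 by omega]
      using hp₂ (i - n₁) (j - n₁) (by omega) (by omega)
  rw [hc₁ i (by omega), hc₂ j (by omega)]
  rcases Nat.eq_zero_or_pos i with rfl | hi₀
  · rw [← hx, ne_comm, G.adj_comm]
    simpa [show n₂ = j - n₁ + 1 ↔ j = n₁ + n₂ - 1 by omega, show j ≠ 1 by omega]
      using hp₂ (j - n₁) n₂ (by omega) le_rfl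
  · have := hAB _ (hw₁.2 i hi₀ (by omega)) _ (hw₂.2 (j - n₁) (by omega) (by omega))
    simpa [this.2, show j ≠ i + 1 by omega, show i ≠ 0 by omega] using this.1

end Walks

section ReachableIn

variable {V : Type*} {G : SimpleGraph V} {W : Set V} {a b c p q x y w : V}

/-- Reflexive even at vertices outside `W`. -/
def ReachableIn (G : SimpleGraph V) (W : Set V) : V → V → Prop :=
  Relation.ReflTransGen fun p q => p ∈ W ∧ q ∈ W ∧ G.Adj p q

lemma ReachableIn.symm (h : ReachableIn G W a b) : ReachableIn G W b a := by
  induction h with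
  | refl => exact Relation.ReflTransGen.refl
  | tail _ hbc ih => exact Relation.ReflTransGen.head ⟨hbc.2.1, hbc.1, hbc.2.2.symm⟩ ih

lemma ReachableIn.trans (h : ReachableIn G W a b) (h' : ReachableIn G W b c) :
    ReachableIn G W a c :=
  Relation.ReflTransGen.trans h h'

lemma ReachableIn.tail_adj (h : ReachableIn G W a b) (hb : b ∈ W) (hc : c ∈ W)
    (hbc : G.Adj b c) : ReachableIn G W a c :=
  Relation.ReflTransGen.tail h ⟨hb, hc, hbc⟩

lemma ReachableIn.mem (h : ReachableIn G W a b) (ha : a ∈ W) : b ∈ W := by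
  induction h with
  | refl => exact ha
  | tail _ h _ => exact h.2.1

lemma ReachableIn.of_insert (h : ReachableIn G (insert w W) a b) (ha : a ∈ W) :
    ReachableIn G W a b ∨ ∃ p, ReachableIn G W a p ∧ G.Adj p w := by
  induction h using Relation.ReflTransGen.head_induction_on with
  | refl => exact Or.inl Relation.ReflTransGen.refl
  | @head a c hac _ ih =>
    obtain ⟨-, hc, hadj⟩ := hac
    rcases hc with rfl | hc
    · exact Or.inr ⟨a, Relation.ReflTransGen.refl, hadj⟩
    · rcases ih hc with h | ⟨p, hp, hpw⟩
      · exact Or.inl (Relation.ReflTransGen.head ⟨ha, hc, hadj⟩ h)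
      · exact Or.inr ⟨p, Relation.ReflTransGen.head ⟨ha, hc, hadj⟩ hp, hpw⟩

lemma ReachableIn.in_component (hap : ReachableIn G W a p) (hpq : ReachableIn G W p q) :
    ReachableIn G {z | ReachableIn G W a z} p q := by
  induction hpq with
  | refl => exact Relation.ReflTransGen.refl
  | @tail b c hpb hbc ih =>
    have hab : ReachableIn G W a b := hap.trans hpb
    exact ih.tail_adj hab (hab.tail_adj hbc.1 hbc.2.1 hbc.2.2) hbc.2.2

lemma exists_walkVia_of_reachableIn (hp : p ∈ W) (hpq : ReachableIn G W p q)
    (hxp : G.Adj x p) (hqy : G.Adj q y) :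
    ∃ n g, IsWalkVia G W n g ∧ g 0 = x ∧ g n = y := by
  obtain ⟨n, f, h0, hn, hf⟩ := hpq.exists_seq
  have hfW : ∀ i ≤ n, f i ∈ W := fun i hi =>
    (hi.lt_or_eq).elim (fun hi => (hf i hi).1) fun hi => hi ▸ hn ▸ hpq.mem hp
  refine ⟨n + 2, fun i => if i = 0 then x else if i ≤ n + 1 then f (i - 1) else y,
    ⟨fun i hi => ?_, fun i hi₀ hi => ?_⟩, rfl, by simp⟩
  · rcases Nat.eq_zero_or_pos i with rfl | hi₀
    · simpa [h0] using hxp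
    rcases (show i ≤ n ∨ i = n + 1 by omega) with hin | rfl
    · simpa [hi₀.ne', hin, show i ≤ n + 1 by omega, show i + 1 - 1 = i - 1 + 1 by omega]
        using (hf (i - 1) (by omega)).2.2
    · simpa [hn] using hqy
  · simpa [hi₀.ne', show i ≤ n + 1 by omega] using hfW (i - 1) (by omega)

end ReachableIn

section Dirac

variable {V : Type*} {G : SimpleGraph V} {s S : Finset V} {a b : V}

def IsSimplicialIn (G : SimpleGraph V) (S : Set V) (v : V) : Prop :=
  G.IsClique (G.neighborSet v ∩ S)

/-- Dirac's dichotomy for the induced subgraph `G[s]`. -/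
def CompleteOrTwoSimplicial (G : SimpleGraph V) (s : Finset V) : Prop :=
  G.IsClique (s : Set V) ∨ ∃ p ∈ s, ∃ q ∈ s, p ≠ q ∧ ¬ G.Adj p q ∧
    IsSimplicialIn G s p ∧ IsSimplicialIn G s q

def IsSeparator (G : SimpleGraph V) (s : Finset V) (a b : V) (S : Finset V) : Prop :=
  S ⊆ s ∧ a ∉ S ∧ b ∉ S ∧ ¬ ReachableIn G (↑s \ ↑S) a b

lemma IsSeparator.symm (h : IsSeparator G s a b S) : IsSeparator G s b a S :=
  ⟨h.1, h.2.2.1, h.2.1, fun hba => h.2.2.2 hba.symm⟩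

lemma exists_minimal_separator (hab : a ≠ b) (hnadj : ¬ G.Adj a b) :
    ∃ S, IsSeparator G s a b S ∧ ∀ S' ⊂ S, ¬ IsSeparator G s a b S' := by
  classical
  have hsep : IsSeparator G s a b ((s.erase a).erase b) := by
    refine ⟨(erase_subset _ _).trans (erase_subset _ _), by simp, by simp, fun h => ?_⟩
    rcases Relation.ReflTransGen.cases_head h with rfl | ⟨c, ⟨-, hc, hac⟩, -⟩
    · exact hab rfl
    · have : c = a ∨ c = b := by
        by_contra! hne
        exact hc.2 (by simp [hne.1, hne.2, hc.1])
      rcases this with rfl | rfl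
      · exact G.irrefl hac
      · exact hnadj hac
  obtain ⟨S, hS, hmin⟩ := wellFounded_lt.has_min {S | IsSeparator G s a b S} ⟨_, hsep⟩
  exact ⟨S, hS, fun S' hS' h => hmin S' h hS'⟩

lemma IsSeparator.exists_adj_of_minimal (hS : IsSeparator G s a b S)
    (hmin : ∀ S' ⊂ S, ¬ IsSeparator G s a b S') (ha : a ∈ s) {x : V} (hx : x ∈ S) :
    ∃ p, ReachableIn G (↑s \ ↑S) a p ∧ G.Adj p x := by
  classical
  have hreach : ReachableIn G (↑s \ ↑(S.erase x)) a b := by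
    by_contra h
    exact hmin _ (erase_ssubset hx) ⟨(erase_subset _ _).trans hS.1,
      fun h' => hS.2.1 (mem_of_mem_erase h'), fun h' => hS.2.2.1 (mem_of_mem_erase h'), h⟩
  have hW : (↑s \ ↑(S.erase x) : Set V) = insert x (↑s \ ↑S) := by
    ext z
    by_cases hz : z = x
    · subst hz; simp [hS.1 hx]
    · simp [hz]
  rw [hW] at hreach
  exact (hreach.of_insert ⟨ha, hS.2.1⟩).resolve_left hS.2.2.2

lemma IsSeparator.ne_and_not_adj (hS : IsSeparator G s a b S) (ha : a ∈ s) (hb : b ∈ s)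
    {p q : V} (hp : ReachableIn G (↑s \ ↑S) a p) (hq : ReachableIn G (↑s \ ↑S) b q) :
    p ≠ q ∧ ¬ G.Adj p q := by
  refine ⟨fun hpq => hS.2.2.2 (hp.trans (hpq ▸ hq.symm)), fun hadj => hS.2.2.2 ?_⟩
  exact (hp.tail_adj (hp.mem ⟨ha, hS.2.1⟩) (hq.mem ⟨hb, hS.2.2.1⟩) hadj).trans hq.symm

lemma IsSeparator.exists_inducedPath (hS : IsSeparator G s a b S)
    (hmin : ∀ S' ⊂ S, ¬ IsSeparator G s a b S') (ha : a ∈ s) {x y : V} (hx : x ∈ S)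
    (hy : y ∈ S) :
    ∃ n g, IsWalkVia G {z | ReachableIn G (↑s \ ↑S) a z} n g ∧ g 0 = x ∧ g n = y ∧
      IsInducedPath G n g := by
  obtain ⟨p, hap, hpx⟩ := hS.exists_adj_of_minimal hmin ha hx
  obtain ⟨q, haq, hqy⟩ := hS.exists_adj_of_minimal hmin ha hy
  exact exists_isInducedPath
    (exists_walkVia_of_reachableIn hap (hap.in_component (hap.symm.trans haq)) hpx.symm hqy)

/-- Two non-adjacent vertices of `S` would be joined by induced paths through the components of
`a` and of `b`, which close up to an induced cycle. -/
lemma IsSeparator.isClique_of_minimal (hG : Chordal G) (hS : IsSeparator G s a b S)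
    (hmin : ∀ S' ⊂ S, ¬ IsSeparator G s a b S') (ha : a ∈ s) (hb : b ∈ s) :
    G.IsClique (S : Set V) := by
  intro x hx y hy hxy
  by_contra hnadj
  obtain ⟨n₁, g₁, hw₁, hx₁, hy₁, hp₁⟩ := hS.exists_inducedPath hmin ha hx hy
  obtain ⟨n₂, g₂, hw₂, hy₂, hx₂, hp₂⟩ :=
    hS.symm.exists_inducedPath (fun S' h h' => hmin S' h h'.symm) hb hy hx
  refine not_chordal_of_induced_paths hw₁ hw₂ hp₁ hp₂ ?_ ?_ (hy₁.trans hy₂.symm)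
    (hx₂.trans hx₁.symm) (fun p hp q hq => hS.ne_and_not_adj ha hb hp hq) hG
  · exact hw₁.two_le (by rw [hx₁, hy₁]; exact hxy) (by rw [hx₁, hy₁]; exact hnadj)
  · exact hw₂.two_le (by rw [hx₂, hy₂]; exact hxy.symm) (by rw [hx₂, hy₂, G.adj_comm]; exact hnadj)

lemma exists_isSimplicialIn_component (IH : ∀ t ⊂ s, CompleteOrTwoSimplicial G t)
    (hSc : G.IsClique (S : Set V)) {r t : V} (hr : r ∈ (↑s \ ↑S : Set V))
    (ht : t ∈ s) (htS : t ∉ S) (hrt : ¬ ReachableIn G (↑s \ ↑S) r t) :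
    ∃ p, ReachableIn G (↑s \ ↑S) r p ∧ IsSimplicialIn G s p := by
  classical
  set s' := s.filter fun z => ReachableIn G (↑s \ ↑S) r z ∨ z ∈ S
  have hs' : s' ⊂ s := Finset.filter_ssubset.2 ⟨t, ht, by simp [htS, hrt]⟩
  have hmem : ∀ p ∈ s', ReachableIn G (↑s \ ↑S) r p ∨ p ∈ S := fun p hp => (mem_filter.1 hp).2
  have hlift : ∀ p, ReachableIn G (↑s \ ↑S) r p → IsSimplicialIn G s' p →
      IsSimplicialIn G s p := by
    intro p hp (hsp : G.IsClique _)
    refine hsp.subset fun c (hc : c ∈ G.neighborSet p ∩ s) => Set.mem_inter hc.1 ?_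
    by_cases hcS : c ∈ S
    · exact mem_filter.2 ⟨hc.2, Or.inr hcS⟩
    · exact mem_filter.2 ⟨hc.2, Or.inl (hp.tail_adj (hp.mem hr) ⟨hc.2, hcS⟩ hc.1)⟩
  rcases IH s' hs' with hcl | ⟨p, hp, q, hq, hpq, hnadj, hps, hqs⟩
  · exact ⟨r, .refl, hlift r .refl (hcl.subset Set.inter_subset_right)⟩
  rcases hmem p hp with hrp | hpS
  · exact ⟨p, hrp, hlift p hrp hps⟩
  rcases hmem q hq with hrq | hqS
  · exact ⟨q, hrq, hlift q hrq hqs⟩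
  exact absurd (hSc hpS hqS hpq) hnadj

/-- Dirac's argument: by induction, the two vertices are found in the components of `a` and of
`b` after deleting a minimal `a`-`b` separator, which is a clique. -/
theorem Chordal.completeOrTwoSimplicial (hG : Chordal G) (s : Finset V) :
    CompleteOrTwoSimplicial G s := by
  induction s using Finset.strongInduction with
  | H s IH =>
  by_cases hcl : G.IsClique (s : Set V)
  · exact Or.inl hcl
  obtain ⟨a, ha, b, hb, hab, hnadj⟩ : ∃ a ∈ s, ∃ b ∈ s, a ≠ b ∧ ¬ G.Adj a b := by
    simpa [SimpleGraph.IsClique, Set.Pairwise] using hcl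
  obtain ⟨S, hS, hmin⟩ := exists_minimal_separator (s := s) hab hnadj
  have hSc := hS.isClique_of_minimal hG hmin ha hb
  obtain ⟨p, hap, hp⟩ := exists_isSimplicialIn_component IH hSc ⟨ha, hS.2.1⟩ hb hS.2.2.1
    hS.2.2.2
  obtain ⟨q, hbq, hq⟩ := exists_isSimplicialIn_component IH hSc ⟨hb, hS.2.2.1⟩ ha hS.2.1
    hS.symm.2.2.2
  obtain ⟨hpq, hnpq⟩ := hS.ne_and_not_adj ha hb hap hbq
  exact Or.inr ⟨p, (hap.mem ⟨ha, hS.2.1⟩).1, q, (hbq.mem ⟨hb, hS.2.2.1⟩).1, hpq, hnpq, hp, hq⟩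

theorem Chordal.exists_isSimplicialIn (hG : Chordal G) (s : Finset V) (hs : s.Nonempty) :
    ∃ v ∈ s, IsSimplicialIn G s v := by
  rcases hG.completeOrTwoSimplicial s with hcl | ⟨p, hp, -, -, -, -, hps, -⟩
  · obtain ⟨v, hv⟩ := hs
    exact ⟨v, hv, hcl.subset Set.inter_subset_right⟩
  · exact ⟨p, hp, hps⟩

end Dirac

section MorseMatching

variable {V : Type*} {X : Set (Finset V)} {M : Set (Finset V × Finset V)}

def CriticalAreMaximal (X : Set (Finset V)) (M : Set (Finset V × Finset V)) : Prop :=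
  ∀ σ, IsCritical X M σ → IsMaximalFace X σ

lemma IsMatching.iUnion {ι β : Type*} {M : ι → Set (Finset V × Finset V)}
    (hM : ∀ i, IsMatching X (M i)) (f : Finset V → β) (g : ι → β) (hg : Function.Injective g)
    (hf : ∀ i, ∀ p ∈ M i, f p.1 = g i ∧ f p.2 = g i) : IsMatching X (⋃ i, M i) := by
  refine ⟨fun p hp => ?_, fun p hp => ?_, fun p hp => ?_, fun p hp => ?_, fun p hp q hq hpq => ?_⟩
  all_goals obtain ⟨i, hp⟩ := Set.mem_iUnion.1 hp
  · exact (hM i).left_mem p hp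
  · exact (hM i).right_mem p hp
  · exact (hM i).subset p hp
  · exact (hM i).card_eq p hp
  obtain ⟨j, hq⟩ := Set.mem_iUnion.1 hq
  obtain rfl : i = j := hg <| by
    obtain ⟨hp₁, hp₂⟩ := hf i p hp
    obtain ⟨hq₁, hq₂⟩ := hf j q hq
    rcases hpq with h | h | h | h <;> simp_all
  exact (hM i).eq_of_shared p hp q hq hpq

lemma IsMatching.image_insert [DecidableEq V] {Y : Set (Finset V)} {u : V}
    (hM : IsMatching Y M) (hY : ∀ τ ∈ Y, u ∉ τ ∧ insert u τ ∈ X) :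
    IsMatching X (Prod.map (insert u) (insert u) '' M) := by
  have hinj : ∀ τ ∈ Y, ∀ τ' ∈ Y, insert u τ = insert u τ' → τ = τ' := fun τ hτ τ' hτ' h => by
    rw [← erase_insert (hY τ hτ).1, h, erase_insert (hY τ' hτ').1]
  refine ⟨?_, ?_, ?_, ?_, ?_⟩
  · rintro _ ⟨q, hq, rfl⟩
    exact (hY _ (hM.left_mem q hq)).2
  · rintro _ ⟨q, hq, rfl⟩
    exact (hY _ (hM.right_mem q hq)).2
  · rintro _ ⟨q, hq, rfl⟩
    exact insert_subset_insert u (hM.subset q hq)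
  · rintro _ ⟨q, hq, rfl⟩
    simp [card_insert_of_notMem (hY _ (hM.left_mem q hq)).1,
      card_insert_of_notMem (hY _ (hM.right_mem q hq)).1, hM.card_eq q hq]
  · rintro _ ⟨q, hq, rfl⟩ _ ⟨q', hq', rfl⟩ h
    have h₁ := hM.left_mem q hq
    have h₂ := hM.right_mem q hq
    have h₁' := hM.left_mem q' hq'
    have h₂' := hM.right_mem q' hq'
    rw [hM.eq_of_shared q hq q' hq' ?_]
    rcases h with h | h | h | h
    · exact .inl (hinj _ h₁ _ h₁' h)
    · exact .inr (.inl (hinj _ h₁ _ h₂' h))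
    · exact .inr (.inr (.inl (hinj _ h₂ _ h₁' h)))
    · exact .inr (.inr (.inr (hinj _ h₂ _ h₂' h)))

/-- A cycle along which `f` never increases stays in one fibre of `f`. -/
lemma acyclic_of_fibres {β : Type*} [PartialOrder β] (f : Finset V → β)
    (hf : ∀ α β, matchStep X M α β → f β ≤ f α)
    (hfib : ∀ σ, ¬ Relation.TransGen (fun α β => matchStep X M α β ∧ f α = f σ ∧ f β = f σ) σ σ) :
    ∀ σ, ¬ Relation.TransGen (matchStep X M) σ σ := by
  have hle : ∀ α β, Relation.TransGen (matchStep X M) α β → f β ≤ f α := fun α β h => by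
    induction h with
    | single h => exact hf _ _ h
    | tail _ h ih => exact (hf _ _ h).trans ih
  have key : ∀ α β, Relation.TransGen (matchStep X M) α β → f α ≤ f β →
      Relation.TransGen (fun α' β' => matchStep X M α' β' ∧ f α' = f α ∧ f β' = f α) α β := by
    intro α β h
    induction h with
    | single h => exact fun hαβ => .single ⟨h, rfl, (hαβ.antisymm (hf _ _ h)).symm⟩
    | @tail γ β hαγ hγβ ih =>
      intro hαβ
      have hγ : f γ = f α := (hle _ _ hαγ).antisymm (hαβ.trans (hf _ _ hγβ))
      exact .tail (ih hγ.ge) ⟨hγβ, hγ, (hαβ.antisymm ((hf _ _ hγβ).trans hγ.le)).symm⟩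
  exact fun σ h => hfib σ (key σ σ h le_rfl)

lemma exists_pair_empty_of_not_isMaximalFace (hcrit : CriticalAreMaximal X M) {σ : Finset V}
    (hσ : IsCritical {σ ∈ X | σ.Nonempty} {p ∈ M | p.1.Nonempty} σ)
    (hnmax : ¬ IsMaximalFace {σ ∈ X | σ.Nonempty} σ) : ∃ p ∈ M, p.1 = ∅ ∧ p.2 = σ := by
  obtain ⟨⟨hσX, hσne⟩, hcr⟩ := hσ
  have : ¬ IsCritical X M σ := fun h =>
    hnmax ⟨⟨hσX, hσne⟩, fun τ hτ => (hcrit σ h).2 τ hτ.1⟩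
  obtain ⟨p, hp, hpσ⟩ : ∃ p ∈ M, p.1 = σ ∨ p.2 = σ := by
    simpa [IsCritical, hσX, or_iff_not_imp_left] using this
  have hp₁ : ¬ p.1.Nonempty := fun h => by
    rcases hpσ with hpσ | hpσ
    · exact (hcr p ⟨hp, h⟩).1 hpσ
    · exact (hcr p ⟨hp, h⟩).2 hpσ
  exact ⟨p, hp, not_nonempty_iff_eq_empty.1 hp₁, hpσ.resolve_left fun h => hp₁ (h ▸ hσne)⟩

lemma exceptOneMaximal_of_criticalAreMaximal (hM : IsAcyclicMatching X M)
    (hcrit : CriticalAreMaximal X M) :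
    IsAcyclicMatching {σ ∈ X | σ.Nonempty} {p ∈ M | p.1.Nonempty} ∧
      ExceptOneMaximal {σ ∈ X | σ.Nonempty} {p ∈ M | p.1.Nonempty} := by
  obtain ⟨hmat, hacyc⟩ := hM
  have hstep : ∀ α β, matchStep {σ ∈ X | σ.Nonempty} {p ∈ M | p.1.Nonempty} α β →
      matchStep X M α β := by
    rintro α β ⟨hα, hβ, hmem | ⟨hsub, hcard, hnot⟩⟩
    · exact ⟨hα.1, hβ.1, .inl hmem.1⟩
    · exact ⟨hα.1, hβ.1, .inr ⟨hsub, hcard, fun h => hnot ⟨h, hβ.2⟩⟩⟩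
  refine ⟨⟨⟨fun p hp => ⟨hmat.left_mem p hp.1, hp.2⟩,
    fun p hp => ⟨hmat.right_mem p hp.1, hp.2.mono (hmat.subset p hp.1)⟩,
    fun p hp => hmat.subset p hp.1, fun p hp => hmat.card_eq p hp.1,
    fun p hp q hq => hmat.eq_of_shared p hp.1 q hq.1⟩,
    fun σ h => hacyc σ (Relation.TransGen.mono hstep _ _ h)⟩,
    fun σ hσ hnmax => ?_, fun σ τ hσ hτ hnσ hnτ => ?_⟩
  · obtain ⟨p, hp, hp₁, rfl⟩ := exists_pair_empty_of_not_isMaximalFace hcrit hσ hnmax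
    simpa [hp₁] using hmat.card_eq p hp
  · obtain ⟨p, hp, hp₁, rfl⟩ := exists_pair_empty_of_not_isMaximalFace hcrit hσ hnσ
    obtain ⟨q, hq, hq₁, rfl⟩ := exists_pair_empty_of_not_isMaximalFace hcrit hτ hnτ
    rw [hmat.eq_of_shared p hp q hq (.inl (hp₁.trans hq₁.symm))]

end MorseMatching

/-- For simplicial `v` this is `∅` or a singleton; it indexes the fibres of the matching. -/
def nbrTrace {V : Type*} (G : SimpleGraph V) (v : V) (σ : Finset V) : Set V :=
  ↑σ ∩ G.neighborSet v

section IndependenceComplex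

variable {V : Type*} {G : SimpleGraph V} {U : Set V} {v : V} {σ τ : Finset V}

lemma avoidIndepE_of_subset (hσ : σ ∈ avoidIndepE G U) (hτ : τ ⊆ σ) : τ ∈ avoidIndepE G U :=
  ⟨fun x hx => hσ.1 x (hτ hx), fun x hx y hy => hσ.2 x (hτ hx) y (hτ hy)⟩

lemma eq_empty_of_mem_avoidIndepE (hU : ∀ x, x ∈ U) (hσ : σ ∈ avoidIndepE G U) : σ = ∅ :=
  eq_empty_of_forall_notMem fun x hx => hσ.1 x hx (hU x)

lemma nbrTrace_mono (h : σ ⊆ τ) : nbrTrace G v σ ⊆ nbrTrace G v τ :=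
  Set.inter_subset_inter_left _ (coe_subset.2 h)

lemma nbrTrace_eq_empty_or_singleton (hsimp : IsSimplicialIn G Uᶜ v)
    (hσ : σ ∈ avoidIndepE G U) :
    nbrTrace G v σ = ∅ ∨ ∃ u ∈ G.neighborSet v \ U, nbrTrace G v σ = {u} := by
  refine or_iff_not_imp_left.2 fun hne => ?_
  obtain ⟨u, huσ, hvu⟩ := Set.nonempty_iff_ne_empty.2 hne
  refine ⟨u, ⟨hvu, hσ.1 u huσ⟩, Set.eq_singleton_iff_unique_mem.2 ⟨⟨huσ, hvu⟩, ?_⟩⟩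
  rintro w ⟨hwσ, hvw⟩
  by_contra hwu
  exact hσ.2 u huσ w hwσ (hsimp ⟨hvu, hσ.1 u huσ⟩ ⟨hvw, hσ.1 w hwσ⟩ (Ne.symm hwu))

end IndependenceComplex

section SimplicialStep

variable {V : Type*} [DecidableEq V] {G : SimpleGraph V} {U : Set V} {v u : V}
  {σ τ : Finset V}

lemma insert_mem_avoidIndepE {w : V} :
    insert w σ ∈ avoidIndepE G U ↔ w ∉ U ∧ (∀ z ∈ σ, ¬ G.Adj w z) ∧ σ ∈ avoidIndepE G U := by
  simp only [avoidIndepE, Set.mem_ofPred_eq, forall_mem_insert, G.irrefl, not_false_eq_true,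
    true_and]
  constructor
  · rintro ⟨⟨hw, hσU⟩, hwσ, hσ⟩
    exact ⟨hw, hwσ, hσU, fun x hx => (hσ x hx).2⟩
  · rintro ⟨hw, hwσ, hσU, hσ⟩
    exact ⟨⟨hw, hσU⟩, hwσ, fun x hx => ⟨fun h => hwσ x hx h.symm, hσ x hx⟩⟩

def coneMatching (G : SimpleGraph V) (U : Set V) (v : V) : Set (Finset V × Finset V) :=
  {p | v ∉ p.1 ∧ p.2 = insert v p.1 ∧ p.2 ∈ avoidIndepE G U}

/-- `none` indexes the cone matching on faces avoiding `N(v)`; `some u` indexes the matching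
`Mu u` of `I(G - U - N[u])`, lifted by adding `u`. -/
def simplicialMatching (G : SimpleGraph V) (U : Set V) (v : V)
    (Mu : V → Set (Finset V × Finset V)) : Set (Finset V × Finset V) :=
  ⋃ o : Option ↥(G.neighborSet v \ U),
    o.elim (coneMatching G U v) fun u => Prod.map (insert ↑u) (insert ↑u) '' Mu u

lemma mem_simplicialMatching {Mu : V → Set (Finset V × Finset V)} {p : Finset V × Finset V} :
    p ∈ simplicialMatching G U v Mu ↔ p ∈ coneMatching G U v ∨
      ∃ u ∈ G.neighborSet v \ U, ∃ q ∈ Mu u, p = (insert u q.1, insert u q.2) := by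
  simp [simplicialMatching, Option.exists, eq_comm]

lemma erase_mem_avoidIndepE_closedNbhd (hσ : σ ∈ avoidIndepE G U)
    (h : nbrTrace G v σ = {u}) : u ∈ σ ∧ σ.erase u ∈ avoidIndepE G (U ∪ closedNbhd G u) := by
  have huσ : u ∈ σ := (h.symm ▸ Set.mem_singleton u : u ∈ nbrTrace G v σ).1
  refine ⟨huσ, fun z hz => ?_, fun x hx y hy => hσ.2 x (mem_of_mem_erase hx) y
    (mem_of_mem_erase hy)⟩
  obtain ⟨hzu, hzσ⟩ := mem_erase.1 hz
  rintro (hzU | rfl | hadj)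
  · exact hσ.1 z hzσ hzU
  · exact hzu rfl
  · exact hσ.2 u huσ z hzσ hadj

lemma insert_mem_avoidIndepE_of_closedNbhd (hsimp : IsSimplicialIn G Uᶜ v)
    (hu : u ∈ G.neighborSet v \ U) (hτ : τ ∈ avoidIndepE G (U ∪ closedNbhd G u)) :
    u ∉ τ ∧ insert u τ ∈ avoidIndepE G U ∧ nbrTrace G v (insert u τ) = {u} := by
  have hz : ∀ z ∈ τ, z ≠ u ∧ z ∉ U ∧ ¬ G.Adj u z := fun z hz => by
    simpa [closedNbhd, not_or] using hτ.1 z hz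
  refine ⟨fun h => (hz u h).1 rfl, insert_mem_avoidIndepE.2 ⟨hu.2, fun z h => (hz z h).2.2,
    fun z h => (hz z h).2.1, hτ.2⟩, ?_⟩
  refine Set.eq_singleton_iff_unique_mem.2 ⟨⟨by simp, hu.1⟩, fun z ⟨hzτ, hvz⟩ => ?_⟩
  rcases mem_insert.1 hzτ with rfl | hzτ
  · rfl
  · obtain ⟨hzu, hzU, hnadj⟩ := hz z hzτ
    exact absurd (hsimp hu ⟨hvz, hzU⟩ hzu.symm) hnadj

lemma isMatching_coneMatching : IsMatching (avoidIndepE G U) (coneMatching G U v) := by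
  refine ⟨fun p hp => avoidIndepE_of_subset hp.2.2 (hp.2.1 ▸ subset_insert v p.1),
    fun p hp => hp.2.2, fun p hp => hp.2.1 ▸ subset_insert v p.1,
    fun p hp => hp.2.1 ▸ card_insert_of_notMem hp.1, fun p hp q hq h => ?_⟩
  have hv : ∀ {τ : Finset V}, v ∉ τ → v ∈ insert v τ := fun _ => mem_insert_self v _
  obtain ⟨hp₁, hp₂, -⟩ := hp
  obtain ⟨hq₁, hq₂, -⟩ := hq
  have h₁ : p.1 = q.1 := by
    rw [hp₂, hq₂] at h
    rcases h with h | h | h | h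
    · exact h
    · exact absurd (h ▸ hv hq₁) hp₁
    · exact absurd (h ▸ hv hp₁) hq₁
    · rw [← erase_insert hp₁, h, erase_insert hq₁]
  exact Prod.ext h₁ (by rw [hp₂, hq₂, h₁])

lemma nbrTrace_of_mem_coneMatching {p : Finset V × Finset V} (hp : p ∈ coneMatching G U v) :
    nbrTrace G v p.1 = ∅ ∧ nbrTrace G v p.2 = ∅ := by
  have h₂ : nbrTrace G v p.2 = ∅ := Set.eq_empty_of_forall_notMem fun z ⟨hz, hvz⟩ =>
    hp.2.2.2 v (hp.2.1 ▸ mem_insert_self v p.1) z hz hvz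
  exact ⟨Set.subset_empty_iff.1 (h₂ ▸ nbrTrace_mono (hp.2.1 ▸ subset_insert v p.1)), h₂⟩

lemma isMatching_simplicialMatching (hsimp : IsSimplicialIn G Uᶜ v)
    {Mu : V → Set (Finset V × Finset V)}
    (hMu : ∀ u ∈ G.neighborSet v \ U, IsMatching (avoidIndepE G (U ∪ closedNbhd G u)) (Mu u)) :
    IsMatching (avoidIndepE G U) (simplicialMatching G U v Mu) := by
  refine IsMatching.iUnion (fun o => ?_) (nbrTrace G v) (fun o => o.elim ∅ fun u => {↑u})
    (fun o o' h => ?_) fun o p hp => ?_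
  · cases o with
    | none => exact isMatching_coneMatching
    | some u => exact (hMu u u.2).image_insert fun τ hτ =>
        (insert_mem_avoidIndepE_of_closedNbhd hsimp u.2 hτ).imp_right And.left
  · cases o <;> cases o' <;> simp_all [Subtype.ext_iff]
  · cases o with
    | none => exact nbrTrace_of_mem_coneMatching hp
    | some u =>
      obtain ⟨q, hq, rfl⟩ := hp
      exact ⟨(insert_mem_avoidIndepE_of_closedNbhd hsimp u.2 ((hMu u u.2).left_mem q hq)).2.2,
        (insert_mem_avoidIndepE_of_closedNbhd hsimp u.2 ((hMu u u.2).right_mem q hq)).2.2⟩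

lemma mem_simplicialMatching_cases (hsimp : IsSimplicialIn G Uᶜ v)
    {Mu : V → Set (Finset V × Finset V)}
    (hMu : ∀ u ∈ G.neighborSet v \ U, IsMatching (avoidIndepE G (U ∪ closedNbhd G u)) (Mu u))
    {p : Finset V × Finset V} (hp : p ∈ simplicialMatching G U v Mu) :
    (p ∈ coneMatching G U v ∧ nbrTrace G v p.1 = ∅ ∧ nbrTrace G v p.2 = ∅) ∨
      ∃ u ∈ G.neighborSet v \ U, ∃ q ∈ Mu u, p = (insert u q.1, insert u q.2) ∧
        u ∉ q.1 ∧ u ∉ q.2 ∧ nbrTrace G v p.1 = {u} ∧ nbrTrace G v p.2 = {u} := by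
  rcases mem_simplicialMatching.1 hp with hp | ⟨u, hu, q, hq, rfl⟩
  · exact .inl ⟨hp, nbrTrace_of_mem_coneMatching hp⟩
  · obtain ⟨h₁, -, ht₁⟩ := insert_mem_avoidIndepE_of_closedNbhd hsimp hu ((hMu u hu).left_mem q hq)
    obtain ⟨h₂, -, ht₂⟩ := insert_mem_avoidIndepE_of_closedNbhd hsimp hu ((hMu u hu).right_mem q hq)
    exact .inr ⟨u, hu, q, hq, rfl, h₁, h₂, ht₁, ht₂⟩

variable {Mu : V → Set (Finset V × Finset V)} {α β : Finset V}

lemma nbrTrace_anti_of_matchStep (hsimp : IsSimplicialIn G Uᶜ v)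
    (hMu : ∀ u ∈ G.neighborSet v \ U, IsMatching (avoidIndepE G (U ∪ closedNbhd G u)) (Mu u))
    (h : matchStep (avoidIndepE G U) (simplicialMatching G U v Mu) α β) :
    nbrTrace G v β ⊆ nbrTrace G v α := by
  rcases h.2.2 with hm | ⟨hsub, -, -⟩
  · rcases mem_simplicialMatching_cases hsimp hMu hm with
      ⟨-, h₁, h₂⟩ | ⟨u, -, -, -, -, -, -, h₁, h₂⟩ <;>
    exact (h₂.trans h₁.symm).le
  · exact nbrTrace_mono hsub

def coneWeight (v : V) (σ : Finset V) : ℕ :=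
  σ.card + if v ∈ σ then 0 else 2

lemma coneWeight_lt_of_matchStep (hsimp : IsSimplicialIn G Uᶜ v)
    (hMu : ∀ u ∈ G.neighborSet v \ U, IsMatching (avoidIndepE G (U ∪ closedNbhd G u)) (Mu u))
    (h : matchStep (avoidIndepE G U) (simplicialMatching G U v Mu) α β)
    (hα : nbrTrace G v α = ∅) : coneWeight v β < coneWeight v α := by
  obtain ⟨hαX, -, hm | ⟨hsub, hcard, hnot⟩⟩ := h
  · rcases mem_simplicialMatching_cases hsimp hMu hm with
      ⟨⟨hv, hβ, -⟩, -⟩ | ⟨u, -, -, -, -, -, -, h₁, -⟩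
    · simp only at hv hβ
      simp [coneWeight, hβ, hv, card_insert_of_notMem hv]
    · exact absurd (hα.symm.trans h₁) (Set.singleton_ne_empty u).symm
  · by_cases hvα : v ∈ α
    · by_cases hvβ : v ∈ β
      · simp [coneWeight, hvα, hvβ, hcard]
      · have hβα : β = α.erase v := eq_of_subset_of_card_le (subset_erase.2 ⟨hsub, hvβ⟩)
          (by rw [card_erase_of_mem hvα, hcard]; rfl)
        exact absurd (mem_simplicialMatching.2 (.inl ⟨hvβ, by rw [hβα, insert_erase hvα], hαX⟩))
          hnot
    · have hvβ : v ∉ β := fun h => hvα (hsub h)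
      simp [coneWeight, hvα, hvβ, hcard]

lemma matchStep_erase (hsimp : IsSimplicialIn G Uᶜ v)
    (hMu : ∀ u ∈ G.neighborSet v \ U, IsMatching (avoidIndepE G (U ∪ closedNbhd G u)) (Mu u))
    {u : V} (hu : u ∈ G.neighborSet v \ U)
    (h : matchStep (avoidIndepE G U) (simplicialMatching G U v Mu) α β)
    (hα : nbrTrace G v α = {u}) (hβ : nbrTrace G v β = {u}) :
    matchStep (avoidIndepE G (U ∪ closedNbhd G u)) (Mu u) (α.erase u) (β.erase u) := by
  obtain ⟨huα, hα'⟩ := erase_mem_avoidIndepE_closedNbhd h.1 hα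
  obtain ⟨huβ, hβ'⟩ := erase_mem_avoidIndepE_closedNbhd h.2.1 hβ
  refine ⟨hα', hβ', ?_⟩
  rcases h.2.2 with hm | ⟨hsub, hcard, hnot⟩
  · rcases mem_simplicialMatching_cases hsimp hMu hm with
      ⟨-, h₁, -⟩ | ⟨u', -, q, hq, hαβ, hq₁, hq₂, h₁, -⟩
    · exact absurd (hα.symm.trans h₁) (Set.singleton_ne_empty u)
    obtain rfl : u' = u := Set.singleton_injective (h₁.symm.trans hα)
    simp only [Prod.mk.injEq] at hαβ
    rw [hαβ.1, hαβ.2, erase_insert hq₁, erase_insert hq₂]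
    exact .inl hq
  · refine .inr ⟨erase_subset_erase u hsub, ?_, fun hq => hnot ?_⟩
    · rw [card_erase_of_mem huα, card_erase_of_mem huβ, hcard]
      have := card_pos.2 ⟨u, huβ⟩
      omega
    · exact mem_simplicialMatching.2 (.inr ⟨u, hu, _, hq, by simp [insert_erase huα,
        insert_erase huβ]⟩)

lemma acyclic_simplicialMatching (hsimp : IsSimplicialIn G Uᶜ v)
    (hMu : ∀ u ∈ G.neighborSet v \ U, IsAcyclicMatching (avoidIndepE G (U ∪ closedNbhd G u))
      (Mu u)) :
    ∀ σ, ¬ Relation.TransGen (matchStep (avoidIndepE G U) (simplicialMatching G U v Mu)) σ σ := by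
  have hMu' := fun u hu => (hMu u hu).1
  refine acyclic_of_fibres (nbrTrace G v) (fun α β h => nbrTrace_anti_of_matchStep hsimp hMu' h)
    fun σ h => ?_
  obtain ⟨τ, hστ, -⟩ := Relation.TransGen.head'_iff.1 h
  rcases nbrTrace_eq_empty_or_singleton hsimp hστ.1.1 with he | ⟨u, hu, he⟩
  · exact lt_irrefl _ (h.lt_of_forall_lt (coneWeight v) fun α β hαβ =>
      coneWeight_lt_of_matchStep hsimp hMu' hαβ.1 (hαβ.2.1.trans he))
  · exact (hMu u hu).2 _ (Relation.TransGen.lift (fun σ : Finset V => σ.erase u)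
      (fun α β hαβ => matchStep_erase hsimp hMu' hu hαβ.1 (hαβ.2.1.trans he) (hαβ.2.2.trans he))
      σ σ h)

lemma criticalAreMaximal_simplicialMatching (hv : v ∉ U) (hsimp : IsSimplicialIn G Uᶜ v)
    (hMu : ∀ u ∈ G.neighborSet v \ U, IsMatching (avoidIndepE G (U ∪ closedNbhd G u)) (Mu u) ∧
      CriticalAreMaximal (avoidIndepE G (U ∪ closedNbhd G u)) (Mu u)) :
    CriticalAreMaximal (avoidIndepE G U) (simplicialMatching G U v Mu) := by
  rintro σ ⟨hσ, hcr⟩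
  rcases nbrTrace_eq_empty_or_singleton hsimp hσ with he | ⟨u, hu, he⟩
  · exfalso
    by_cases hvσ : v ∈ σ
    · exact (hcr (σ.erase v, σ) (mem_simplicialMatching.2 (.inl
        ⟨notMem_erase v σ, (insert_erase hvσ).symm, hσ⟩))).2 rfl
    · have hnbr : ∀ z ∈ σ, ¬ G.Adj v z := fun z hz hvz =>
        (he ▸ (⟨hz, hvz⟩ : z ∈ nbrTrace G v σ) : z ∈ (∅ : Set V))
      exact (hcr (σ, insert v σ) (mem_simplicialMatching.2 (.inl
        ⟨hvσ, rfl, insert_mem_avoidIndepE.2 ⟨hv, hnbr, hσ⟩⟩))).1 rfl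
  obtain ⟨huσ, hσ'⟩ := erase_mem_avoidIndepE_closedNbhd hσ he
  have hcrit' : IsCritical (avoidIndepE G (U ∪ closedNbhd G u)) (Mu u) (σ.erase u) := by
    refine ⟨hσ', fun q hq => ?_⟩
    have hlift := hcr _ (mem_simplicialMatching.2 (.inr ⟨u, hu, q, hq, rfl⟩))
    exact ⟨fun h => hlift.1 (by rw [h, insert_erase huσ]),
      fun h => hlift.2 (by rw [h, insert_erase huσ])⟩
  refine ⟨hσ, fun ρ hρ hσρ => ?_⟩
  have hρu : nbrTrace G v ρ = {u} := by
    have hsub : {u} ⊆ nbrTrace G v ρ := he ▸ nbrTrace_mono hσρ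
    rcases nbrTrace_eq_empty_or_singleton hsimp hρ with h | ⟨w, -, h⟩
    · exact absurd (h ▸ hsub) (Set.singleton_nonempty u).not_subset_empty
    · rw [h] at hsub ⊢
      rw [Set.singleton_subset_singleton.1 hsub]
  obtain ⟨huρ, hρ'⟩ := erase_mem_avoidIndepE_closedNbhd hρ hρu
  rw [← insert_erase huσ, ((hMu u hu).2 _ hcrit').2 _ hρ' (erase_subset_erase u hσρ),
    insert_erase huρ]

end SimplicialStep

section Main

variable {V : Type*} {G : SimpleGraph V} {U : Set V}

lemma isAcyclicMatching_empty_and_criticalAreMaximal (hU : ∀ x, x ∈ U) :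
    IsAcyclicMatching (avoidIndepE G U) ∅ ∧ CriticalAreMaximal (avoidIndepE G U) ∅ := by
  refine ⟨⟨⟨by simp, by simp, by simp, by simp, by simp⟩, fun σ h => ?_⟩, fun σ hσ =>
    ⟨hσ.1, fun τ hτ _ => by rw [eq_empty_of_mem_avoidIndepE hU hσ.1,
      eq_empty_of_mem_avoidIndepE hU hτ]⟩⟩
  obtain ⟨τ, ⟨hσ, hτ, hm | ⟨-, hcard, -⟩⟩, -⟩ := Relation.TransGen.head'_iff.1 h
  · exact hm
  · simp [eq_empty_of_mem_avoidIndepE hU hσ, eq_empty_of_mem_avoidIndepE hU hτ] at hcard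

theorem Chordal.exists_isAcyclicMatching_criticalAreMaximal [Finite V] [DecidableEq V]
    (hG : Chordal G) (U : Set V) :
    ∃ M, IsAcyclicMatching (avoidIndepE G U) M ∧ CriticalAreMaximal (avoidIndepE G U) M := by
  induction U using WellFoundedGT.induction with
  | _ U IH =>
  by_cases hU : ∀ x, x ∈ U
  · exact ⟨∅, isAcyclicMatching_empty_and_criticalAreMaximal hU⟩
  obtain ⟨v, hv, hsimp⟩ : ∃ v ∉ U, IsSimplicialIn G Uᶜ v := by
    push Not at hU
    obtain ⟨x, hx⟩ := hU
    have := Fintype.ofFinite V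
    classical
    obtain ⟨v, hv, hsimp⟩ := hG.exists_isSimplicialIn Uᶜ.toFinset ⟨x, by simpa⟩
    exact ⟨v, by simpa using hv, by simpa using hsimp⟩
  choose! Mu hMu using fun u (hu : u ∈ G.neighborSet v \ U) => IH (U ∪ closedNbhd G u)
    ((Set.ssubset_iff_of_subset Set.subset_union_left).2 ⟨u, .inr (Set.mem_insert u _), hu.2⟩)
  exact ⟨_, ⟨isMatching_simplicialMatching hsimp fun u hu => (hMu u hu).1.1,
    acyclic_simplicialMatching hsimp fun u hu => (hMu u hu).1⟩,
    criticalAreMaximal_simplicialMatching hv hsimp fun u hu => ⟨(hMu u hu).1.1, (hMu u hu).2⟩⟩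

end Main

theorem stmt_11 {V : Type*} [Fintype V] [DecidableEq V] (G : SimpleGraph V)
    (hG : Chordal G) :
    ∃ M, IsAcyclicMatching (indepComplex G) M ∧ ExceptOneMaximal (indepComplex G) M := by
  obtain ⟨M, hM, hcrit⟩ := hG.exists_isAcyclicMatching_criticalAreMaximal ∅
  have hX : {σ ∈ avoidIndepE G ∅ | σ.Nonempty} = indepComplex G := by
    ext σ
    simp [indepComplex, avoidIndep, avoidIndepE, and_comm]
  exact hX ▸ ⟨_, exceptOneMaximal_of_criticalAreMaximal hM hcrit⟩
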